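/- arXiv:1907.12881 — 6 statements merged into one kernel-verified Lean document; each statement's English description precedes it below -/
import Mathlib

section
/- With M, u, M^∞ as above, the group inverse Z = (Id − M + M^∞)^{-1} satisfies: for any matrix m whose columns sum to zero, (Id − M) Z m u = m u, i.e., Z m u solves the linear-response equation (Id − M) w = m u. -/
theorem group_inverse_solves_linear_response
    (N : ℕ) (M : Matrix (Fin N) (Fin N) ℝ)
    (hnn : ∀ i j, 0 ≤ M i j) (hcol : ∀ j, ∑ i, M i j = 1)
    (hmix : ∃ p : ℕ, 0 < p ∧ ∀ i j, 0 < (M ^ p) i j)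
    (u : Fin N → ℝ) (hupos : ∀ i, 0 < u i) (husum : ∑ i, u i = 1)
    (hu : M.mulVec u = u)
    (Minf : Matrix (Fin N) (Fin N) ℝ) (hMinf : ∀ i j, Minf i j = u i)
    (hdet : IsUnit (1 - M + Minf).det)
    (Z : Matrix (Fin N) (Fin N) ℝ) (hZ : Z = (1 - M + Minf)⁻¹)
    (m : Matrix (Fin N) (Fin N) ℝ) (hm : ∀ j, ∑ i, m i j = 0) :
    (1 - M).mulVec (Z.mulVec (m.mulVec u)) = m.mulVec u := by
  have hinv : (1 - M + Minf) * Z = 1 := by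
    rw [hZ]; exact Matrix.mul_nonsing_inv _ hdet
  have hcolA : ∀ j, ∑ k, (1 - M + Minf) k j = 1 := by
    intro j
    have h1 : ∑ k, (1 : Matrix (Fin N) (Fin N) ℝ) k j = 1 := by
      simp [Matrix.one_apply]
    simp only [Matrix.add_apply, Matrix.sub_apply, Finset.sum_add_distrib,
      Finset.sum_sub_distrib, h1, hcol, hMinf, husum]
    ring
  have hMinfA : Minf * (1 - M + Minf) = Minf := by
    ext i j
    rw [Matrix.mul_apply]
    simp only [hMinf]
    rw [← Finset.mul_sum, hcolA, mul_one]
  have hMZ : Minf * Z = Minf := by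
    calc Minf * Z = (Minf * (1 - M + Minf)) * Z := by rw [hMinfA]
    _ = Minf * ((1 - M + Minf) * Z) := by rw [Matrix.mul_assoc]
    _ = Minf := by rw [hinv, Matrix.mul_one]
  have h1M : (1 - M) * Z = 1 - Minf := by
    have : (1 - M) * Z + Minf * Z = 1 := by
      rw [← Matrix.add_mul]; exact hinv
    rw [hMZ] at this
    linear_combination (norm := abel) this
  set v := m.mulVec u with hv
  have hsumv : ∑ j, v j = 0 := by
    simp only [hv, Matrix.mulVec, dotProduct]
    rw [Finset.sum_comm]
    simp only [← Finset.sum_mul, hm]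
    simp
  have hMinfv : Minf.mulVec v = 0 := by
    ext i
    simp only [Matrix.mulVec, dotProduct, hMinf, Pi.zero_apply]
    rw [← Finset.mul_sum, hsumv, mul_zero]
  rw [Matrix.mulVec_mulVec, h1M, Matrix.sub_mulVec, hMinfv, Matrix.one_mulVec, sub_zero]
end

section
/- Let M be a mixing column-stochastic matrix with invariant probability vector u, and let m_1, …, m_n be matrices with zero column sums. Suppose max_k |ε_k| < (1 − ‖M|_V‖₁) / (n · max_k ‖m_k‖₁), where V = ker(ι) and ‖·‖₁ denotes the ℓ¹ operator norm. Then the series u + ∑_{i=1}^∞ (∑_{k=1}^n ε_k Ψ_k)^i u, with Ψ_k = (Id − M)|_V^{-1} m_k, converges absolutely in ℓ¹ norm. -/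
/-- ℓ¹ operator norm of a matrix: the maximal column absolute sum. -/
noncomputable def l1opNorm {N : ℕ} (A : Matrix (Fin (N+1)) (Fin (N+1)) ℝ) : ℝ :=
  Finset.univ.sup' Finset.univ_nonempty fun j => ∑ i, |A i j|

/-- Ergodicity coefficient of a column-stochastic matrix, which equals the
ℓ¹ operator norm of `M` restricted to the hyperplane `V = {x : ∑ i, x i = 0}`. -/
noncomputable def ergCoeff {N : ℕ} (M : Matrix (Fin (N+1)) (Fin (N+1)) ℝ) : ℝ :=
  (1/2) * Finset.univ.sup' Finset.univ_nonempty
    (fun jj : Fin (N+1) × Fin (N+1) => ∑ i, |M i jj.1 - M i jj.2|)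



lemma colsum_le_l1opNorm {N : ℕ} (A : Matrix (Fin (N+1)) (Fin (N+1)) ℝ) (j : Fin (N+1)) :
    ∑ i, |A i j| ≤ l1opNorm A :=
  Finset.le_sup' (f := fun j => ∑ i, |A i j|) (Finset.mem_univ j)

lemma l1opNorm_nonneg {N : ℕ} (A : Matrix (Fin (N+1)) (Fin (N+1)) ℝ) : 0 ≤ l1opNorm A :=
  le_trans (Finset.sum_nonneg fun i _ => abs_nonneg _) (colsum_le_l1opNorm A 0)

lemma pairsum_le_ergCoeff {N : ℕ} (M : Matrix (Fin (N+1)) (Fin (N+1)) ℝ) (j k : Fin (N+1)) :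
    ∑ i, |M i j - M i k| ≤ 2 * ergCoeff M := by
  have h := Finset.le_sup' (f := fun jj : Fin (N+1) × Fin (N+1) => ∑ i, |M i jj.1 - M i jj.2|)
    (Finset.mem_univ (j, k))
  unfold ergCoeff; dsimp at h ⊢; linarith

lemma ergCoeff_nonneg {N : ℕ} (M : Matrix (Fin (N+1)) (Fin (N+1)) ℝ) : 0 ≤ ergCoeff M := by
  have h := pairsum_le_ergCoeff M 0 0
  have h2 : (0:ℝ) ≤ ∑ i, |M i (0:Fin (N+1)) - M i 0| := Finset.sum_nonneg fun i _ => abs_nonneg _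
  linarith

lemma l1_mulVec_le {N : ℕ} (B : Matrix (Fin (N+1)) (Fin (N+1)) ℝ) (x : Fin (N+1) → ℝ) :
    ∑ i, |B.mulVec x i| ≤ l1opNorm B * ∑ j, |x j| := by
  calc ∑ i, |B.mulVec x i| ≤ ∑ i, ∑ j, |B i j * x j| := by
        apply Finset.sum_le_sum; intro i _
        rw [Matrix.mulVec, dotProduct]
        exact Finset.abs_sum_le_sum_abs _ _
    _ = ∑ j, |x j| * ∑ i, |B i j| := by
        rw [Finset.sum_comm]
        apply Finset.sum_congr rfl; intro j _
        rw [Finset.mul_sum]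
        exact Finset.sum_congr rfl fun i _ => by rw [abs_mul]; ring
    _ ≤ ∑ j, |x j| * l1opNorm B := by
        apply Finset.sum_le_sum; intro j _
        exact mul_le_mul_of_nonneg_left (colsum_le_l1opNorm B j) (abs_nonneg _)
    _ = l1opNorm B * ∑ j, |x j| := by
        rw [← Finset.sum_mul, mul_comm]

lemma dobrushin {N : ℕ} (M : Matrix (Fin (N+1)) (Fin (N+1)) ℝ)
    (x : Fin (N+1) → ℝ) (hx : ∑ j, x j = 0) :
    ∑ i, |M.mulVec x i| ≤ ergCoeff M * ∑ j, |x j| := by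
  set p : Fin (N+1) → ℝ := fun j => max (x j) 0 with hp
  set q : Fin (N+1) → ℝ := fun j => max (-x j) 0 with hq'
  have hpq : ∀ j, x j = p j - q j := by
    intro j; simp only [hp, hq']
    rcases le_total (x j) 0 with h | h
    · rw [max_eq_right h, max_eq_left (by linarith)]; ring
    · rw [max_eq_left h, max_eq_right (by linarith)]; ring
  have habsj : ∀ j, |x j| = p j + q j := by
    intro j; simp only [hp, hq']
    rcases le_total (x j) 0 with h | h
    · rw [max_eq_right h, max_eq_left (by linarith), abs_of_nonpos h]; ring
    · rw [max_eq_left h, max_eq_right (by linarith), abs_of_nonneg h]; ring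
  have hpnn : ∀ j, 0 ≤ p j := fun j => le_max_right _ _
  have hqnn : ∀ j, 0 ≤ q j := fun j => le_max_right _ _
  set s : ℝ := ∑ j, p j with hs
  have hqs : ∑ j, q j = s := by
    have : ∑ j, (p j - q j) = 0 := by
      rw [← hx]; exact Finset.sum_congr rfl fun j _ => (hpq j).symm
    rw [Finset.sum_sub_distrib] at this; linarith
  have habs : ∑ j, |x j| = 2 * s := by
    have : ∑ j, |x j| = ∑ j, (p j + q j) := Finset.sum_congr rfl fun j _ => habsj j
    rw [this, Finset.sum_add_distrib, hqs]; ring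
  have hsnn : 0 ≤ s := Finset.sum_nonneg fun j _ => hpnn j
  rcases eq_or_lt_of_le hsnn with hs0 | hs0
  · -- s = 0 : x = 0
    have hx0 : ∀ j, x j = 0 := by
      intro j
      have h1 : ∑ j, |x j| = 0 := by rw [habs, ← hs0]; ring
      have := (Finset.sum_eq_zero_iff_of_nonneg (fun j _ => abs_nonneg (x j))).mp h1 j
        (Finset.mem_univ j)
      exact abs_eq_zero.mp this
    have : x = 0 := funext hx0
    rw [this, Matrix.mulVec_zero]
    simp
  · -- s > 0
    have key : ∀ i, ∑ j, ∑ k, p j * q k * (M i j - M i k) = s * M.mulVec x i := by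
      intro i
      have h1 : ∑ j, ∑ k, p j * q k * (M i j - M i k)
          = (∑ j, ∑ k, (p j * M i j) * q k) - ∑ j, ∑ k, p j * (q k * M i k) := by
        rw [← Finset.sum_sub_distrib]
        apply Finset.sum_congr rfl; intro j _
        rw [← Finset.sum_sub_distrib]
        apply Finset.sum_congr rfl; intro k _; ring
      rw [h1, ← Finset.sum_mul_sum, ← Finset.sum_mul_sum, hqs]
      have hMx : M.mulVec x i = (∑ j, p j * M i j) - (∑ j, q j * M i j) := by
        rw [← Finset.sum_sub_distrib, Matrix.mulVec, dotProduct]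
        apply Finset.sum_congr rfl; intro j _; rw [hpq j]; ring
      rw [hMx]; ring
    have hb : s * ∑ i, |M.mulVec x i| ≤ 2 * ergCoeff M * (s * s) := by
      calc s * ∑ i, |M.mulVec x i| = ∑ i, |s * M.mulVec x i| := by
            rw [Finset.mul_sum]
            exact Finset.sum_congr rfl fun i _ => by
              rw [abs_mul, abs_of_pos hs0]
        _ = ∑ i, |∑ j, ∑ k, p j * q k * (M i j - M i k)| := by
            exact Finset.sum_congr rfl fun i _ => by rw [key i]
        _ ≤ ∑ i, ∑ j, ∑ k, |p j * q k * (M i j - M i k)| := by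
            apply Finset.sum_le_sum; intro i _
            calc |∑ j, ∑ k, p j * q k * (M i j - M i k)|
                ≤ ∑ j, |∑ k, p j * q k * (M i j - M i k)| := Finset.abs_sum_le_sum_abs _ _
              _ ≤ ∑ j, ∑ k, |p j * q k * (M i j - M i k)| :=
                  Finset.sum_le_sum fun j _ => Finset.abs_sum_le_sum_abs _ _
        _ = ∑ j, ∑ k, p j * q k * ∑ i, |M i j - M i k| := by
            rw [Finset.sum_comm]
            apply Finset.sum_congr rfl; intro j _
            rw [Finset.sum_comm]
            apply Finset.sum_congr rfl; intro k _
            rw [Finset.mul_sum]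
            apply Finset.sum_congr rfl; intro i _
            rw [abs_mul, abs_mul, abs_of_nonneg (hpnn j), abs_of_nonneg (hqnn k)]
        _ ≤ ∑ j, ∑ k, p j * q k * (2 * ergCoeff M) := by
            apply Finset.sum_le_sum; intro j _
            apply Finset.sum_le_sum; intro k _
            exact mul_le_mul_of_nonneg_left (pairsum_le_ergCoeff M j k)
              (mul_nonneg (hpnn j) (hqnn k))
        _ = 2 * ergCoeff M * (s * s) := by
            simp only [← Finset.sum_mul, ← Finset.mul_sum]
            rw [hqs]; ring
    rw [habs]
    nlinarith [hb, hs0]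

theorem perturbative_series_converges_absolutely
    (N n : ℕ) (M : Matrix (Fin (N+1)) (Fin (N+1)) ℝ)
    (hnn : ∀ i j, 0 ≤ M i j) (hcol : ∀ j, ∑ i, M i j = 1)
    (hmix : ∃ p : ℕ, 0 < p ∧ ∀ i j, 0 < (M ^ p) i j)
    (u : Fin (N+1) → ℝ) (hupos : ∀ i, 0 ≤ u i) (husum : ∑ i, u i = 1)
    (hu : M.mulVec u = u)
    (m Ψ : Fin (n+1) → Matrix (Fin (N+1)) (Fin (N+1)) ℝ)
    (hmcol : ∀ k j, ∑ i, m k i j = 0)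
    (hΨ : ∀ k, (1 - M) * Ψ k = m k)
    (hΨV : ∀ k j, ∑ i, Ψ k i j = 0)
    (hτ : ergCoeff M < 1)
    (ε : Fin (n+1) → ℝ)
    (hε : (Finset.univ.sup' Finset.univ_nonempty fun k => |ε k|) <
      (1 - ergCoeff M) /
        ((n + 1) * Finset.univ.sup' Finset.univ_nonempty fun k => l1opNorm (m k))) :
    Summable (fun i : ℕ => ∑ j, |(((∑ k, ε k • Ψ k) ^ i).mulVec u) j|) := by
  set τ : ℝ := ergCoeff M with hτdef
  set A : Matrix (Fin (N+1)) (Fin (N+1)) ℝ := ∑ k, ε k • Ψ k with hA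
  set m' : Matrix (Fin (N+1)) (Fin (N+1)) ℝ := ∑ k, ε k • m k with hm'
  set Mε : ℝ := Finset.univ.sup' Finset.univ_nonempty fun k => |ε k| with hMε
  set Mm : ℝ := Finset.univ.sup' Finset.univ_nonempty fun k => l1opNorm (m k) with hMm
  have hMεnn : 0 ≤ Mε :=
    le_trans (abs_nonneg (ε 0)) (Finset.le_sup' (f := fun k => |ε k|) (Finset.mem_univ 0))
  have hMmnn : 0 ≤ Mm :=
    le_trans (l1opNorm_nonneg (m 0))
      (Finset.le_sup' (f := fun k => l1opNorm (m k)) (Finset.mem_univ 0))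
  have hMmpos : 0 < Mm := by
    rcases eq_or_lt_of_le hMmnn with h | h
    · exfalso; rw [← h] at hε; simp at hε; linarith
    · exact h
  -- ℓ¹ norm of m' is < 1 - τ
  have hm'norm : l1opNorm m' < 1 - τ := by
    have hle : l1opNorm m' ≤ (n+1) * Mε * Mm := by
      apply Finset.sup'_le; intro j _
      calc ∑ i, |m' i j| ≤ ∑ i, ∑ k, |ε k * m k i j| := by
            apply Finset.sum_le_sum; intro i _
            have : m' i j = ∑ k, ε k * m k i j := by
              rw [hm']; simp [Matrix.sum_apply]
            rw [this]; exact Finset.abs_sum_le_sum_abs _ _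
        _ = ∑ k, |ε k| * ∑ i, |m k i j| := by
            rw [Finset.sum_comm]
            exact Finset.sum_congr rfl fun k _ => by
              rw [Finset.mul_sum]; exact Finset.sum_congr rfl fun i _ => abs_mul _ _
        _ ≤ ∑ k : Fin (n+1), Mε * Mm := by
            apply Finset.sum_le_sum; intro k _
            apply mul_le_mul
            · exact Finset.le_sup' (f := fun k => |ε k|) (Finset.mem_univ k)
            · exact le_trans (colsum_le_l1opNorm (m k) j)
                (Finset.le_sup' (f := fun k => l1opNorm (m k)) (Finset.mem_univ k))
            · exact Finset.sum_nonneg fun i _ => abs_nonneg _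
            · exact hMεnn
        _ = (n+1) * Mε * Mm := by
            rw [Finset.sum_const, Finset.card_univ, Fintype.card_fin]
            push_cast; ring
    have hlt : (n+1 : ℝ) * Mε * Mm < 1 - τ := by
      have hpos : (0:ℝ) < (n+1) * Mm := by positivity
      have := (lt_div_iff₀ hpos).mp hε
      nlinarith
    linarith
  have h1τ : (0:ℝ) < 1 - τ := by linarith
  set r : ℝ := l1opNorm m' / (1 - τ) with hr
  have hr0 : 0 ≤ r := div_nonneg (l1opNorm_nonneg m') (le_of_lt h1τ)
  have hr1 : r < 1 := (div_lt_one h1τ).mpr hm'norm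
  -- A = M * A + m'
  have hAeq : A = M * A + m' := by
    have h1 : (1 - M) * A = m' := by
      rw [hA, hm', Finset.mul_sum]
      exact Finset.sum_congr rfl fun k _ => by rw [Matrix.mul_smul, hΨ k]
    have h2 : A - M * A = m' := by rw [← h1]; rw [sub_mul, one_mul]
    have h3 := sub_eq_iff_eq_add.mp h2
    rw [add_comm (M * A) m']
    exact h3
  -- columns of A sum to zero, hence A.mulVec x ∈ V
  have hAV : ∀ x : Fin (N+1) → ℝ, ∑ i, A.mulVec x i = 0 := by
    intro x
    have hAcol : ∀ j, ∑ i, A i j = 0 := by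
      intro j
      rw [hA]
      calc ∑ i, (∑ k, ε k • Ψ k) i j = ∑ i, ∑ k, ε k * Ψ k i j := by
            exact Finset.sum_congr rfl fun i _ => by simp [Matrix.sum_apply]
        _ = ∑ k, ε k * ∑ i, Ψ k i j := by
            rw [Finset.sum_comm]
            exact Finset.sum_congr rfl fun k _ => by rw [Finset.mul_sum]
        _ = 0 := by simp [hΨV]
    calc ∑ i, A.mulVec x i = ∑ i, ∑ j, A i j * x j := by
          exact Finset.sum_congr rfl fun i _ => by rw [Matrix.mulVec, dotProduct]
      _ = ∑ j, (∑ i, A i j) * x j := by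
          rw [Finset.sum_comm]
          exact Finset.sum_congr rfl fun j _ => by rw [Finset.sum_mul]
      _ = 0 := by simp [hAcol]
  -- one-step contraction
  have hstep : ∀ x : Fin (N+1) → ℝ, ∑ i, |A.mulVec x i| ≤ r * ∑ j, |x j| := by
    intro x
    set y : Fin (N+1) → ℝ := A.mulVec x with hy
    have hyV : ∑ i, y i = 0 := hAV x
    have hdecomp : y = M.mulVec y + m'.mulVec x := by
      rw [hy]
      conv_lhs => rw [hAeq]
      rw [Matrix.add_mulVec, Matrix.mulVec_mulVec]
    have hb : ∑ i, |y i| ≤ τ * ∑ i, |y i| + l1opNorm m' * ∑ j, |x j| := by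
      calc ∑ i, |y i| = ∑ i, |M.mulVec y i + m'.mulVec x i| := by
            exact Finset.sum_congr rfl fun i _ => by
              conv_lhs => rw [hdecomp]
              simp
        _ ≤ ∑ i, (|M.mulVec y i| + |m'.mulVec x i|) :=
            Finset.sum_le_sum fun i _ => abs_add_le _ _
        _ = (∑ i, |M.mulVec y i|) + ∑ i, |m'.mulVec x i| := Finset.sum_add_distrib
        _ ≤ τ * ∑ i, |y i| + l1opNorm m' * ∑ j, |x j| :=
            add_le_add (dobrushin M y hyV) (l1_mulVec_le m' x)
    rw [hr, div_mul_eq_mul_div, le_div_iff₀ h1τ]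
    nlinarith [hb]
  -- geometric bound
  have hgeo : ∀ i : ℕ, ∑ j, |((A ^ i).mulVec u) j| ≤ r ^ i := by
    intro i
    induction i with
    | zero =>
      simp only [pow_zero, Matrix.one_mulVec]
      have h : ∑ j, |u j| = 1 := by
        calc ∑ j, |u j| = ∑ j, u j := Finset.sum_congr rfl fun j _ => abs_of_nonneg (hupos j)
          _ = 1 := husum
      exact h.le
    | succ i ih =>
      rw [pow_succ']
      have : (A * A ^ i).mulVec u = A.mulVec ((A ^ i).mulVec u) := by
        rw [Matrix.mulVec_mulVec]
      rw [this, pow_succ']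
      calc ∑ j, |A.mulVec ((A ^ i).mulVec u) j| ≤ r * ∑ j, |((A ^ i).mulVec u) j| := hstep _
        _ ≤ r * r ^ i := mul_le_mul_of_nonneg_left ih hr0
  exact Summable.of_nonneg_of_le (fun i => Finset.sum_nonneg fun j _ => abs_nonneg _)
    hgeo (summable_geometric_of_lt_one hr0 hr1)
end

section
/- Under the assumptions of the convergence of the perturbative series, the limit v = (Id − ∑_{k=1}^n ε_k Ψ_k)^{-1} u satisfies the perturbed fixed point equation (M + ∑_{k=1}^n ε_k m_k) v = v. -/
theorem perturbed_fixed_point_equation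
    (N n : ℕ) (M : Matrix (Fin N) (Fin N) ℝ)
    (hnn : ∀ i j, 0 ≤ M i j) (hcol : ∀ j, ∑ i, M i j = 1)
    (hmix : ∃ p : ℕ, 0 < p ∧ ∀ i j, 0 < (M ^ p) i j)
    (u : Fin N → ℝ) (hupos : ∀ i, 0 ≤ u i) (husum : ∑ i, u i = 1)
    (hu : M.mulVec u = u)
    (m Ψ : Fin n → Matrix (Fin N) (Fin N) ℝ)
    (hmcol : ∀ k j, ∑ i, m k i j = 0)
    (hΨ : ∀ k, (1 - M) * Ψ k = m k)
    (hΨV : ∀ k j, ∑ i, Ψ k i j = 0)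
    (ε : Fin n → ℝ)
    (hdet : IsUnit (1 - ∑ k, ε k • Ψ k).det)
    (v : Fin N → ℝ) (hv : v = (1 - ∑ k, ε k • Ψ k)⁻¹.mulVec u) :
    (M + ∑ k, ε k • m k).mulVec v = v := by
  set A := (1 - ∑ k, ε k • Ψ k) with hA
  have hAv : A.mulVec v = u := by
    rw [hv, Matrix.mulVec_mulVec, Matrix.mul_nonsing_inv _ hdet, Matrix.one_mulVec]
  have h1 : (1 - M) * A = (1 - M) - ∑ k, ε k • m k := by
    rw [hA, Matrix.mul_sub, Matrix.mul_one, Matrix.mul_sum]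
    congr 1
    refine Finset.sum_congr rfl fun k _ => ?_
    rw [Matrix.mul_smul, hΨ]
  have key : ((1 - M) - ∑ k, ε k • m k).mulVec v = 0 := by
    rw [← h1, ← Matrix.mulVec_mulVec, hAv, Matrix.sub_mulVec, Matrix.one_mulVec, hu,
      sub_self]
  have := sub_eq_zero.mpr key.symm
  rw [Matrix.sub_mulVec, Matrix.sub_mulVec, Matrix.one_mulVec] at key
  rw [Matrix.add_mulVec]
  have : v - M.mulVec v - (∑ k, ε k • m k).mulVec v = 0 := key
  linear_combination (norm := module) -this
end

section
/- Let M be a diagonalizable mixing column-stochastic matrix, M = X^{-1} Λ X with Λ = diag(1, λ_2, …, λ_N). If κ(X) · max_k |ε_k| · n · max_k ‖m_k‖ < (1/2) · min_{2 ≤ j ≤ N} (1 − |λ_j|), then every eigenvalue μ ≠ 1 of the perturbed matrix M + ∑_k ε_k m_k satisfies |μ| < 1; in particular, 1 is a simple eigenvalue of the perturbed matrix. -/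
/-!
The perturbations have zero column sums, so `1ᵀ` is a left eigenvector of both `M` and the
perturbed matrix `A = M + E` for the eigenvalue `1`. Hence an eigenvector `v` of `A` for `μ ≠ 1`
has coordinate sum `0`, while the spectral gap forces row `0` of `X` to be a multiple of `1ᵀ`;
so `w = X v` vanishes at `0`. Bauer–Fike, run on the coordinates `w`, gives
`|μ - λ_j| ≤ κ(X) ‖E‖` for some `j` with `w_j ≠ 0`, so `j ≠ 0` and `|μ| ≤ |λ_j| + κ(X) ‖E‖ < 1`.
For `μ = 1` the same estimate is contradictory, so the eigenspace of `1` meets the sum-zero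
hyperplane trivially; it is nonzero because `1ᵀ (A - 1) = 0`.
-/

/-- ℓ¹ operator norm of a complex matrix: the maximal column absolute sum. -/
noncomputable def l1opNormC {N : ℕ} (A : Matrix (Fin (N+2)) (Fin (N+2)) ℂ) : ℝ :=
  Finset.univ.sup' Finset.univ_nonempty fun j => ∑ i, ‖A i j‖

/-- ℓ¹ operator norm of a real matrix: the maximal column absolute sum. -/
noncomputable def l1opNormR {N : ℕ} (A : Matrix (Fin (N+2)) (Fin (N+2)) ℝ) : ℝ :=
  Finset.univ.sup' Finset.univ_nonempty fun j => ∑ i, |A i j|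

open Matrix Finset

lemma Submodule.finrank_eq_one_of_forall_eq_zero {K V : Type*} [Field K] [AddCommGroup V]
    [Module K V] [FiniteDimensional K V] {S : Submodule K V} (hS : S ≠ ⊥) (f : V →ₗ[K] K)
    (hf : ∀ x ∈ S, f x = 0 → x = 0) : Module.finrank K S = 1 := by
  have hinj : Function.Injective (f ∘ₗ S.subtype) := by
    rw [← LinearMap.ker_eq_bot, Submodule.eq_bot_iff]
    exact fun x hx => Subtype.ext (hf x x.2 hx)
  refine le_antisymm ?_ (Submodule.one_le_finrank_iff.mpr hS)
  simpa using LinearMap.finrank_le_finrank_of_injective hinj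

section ColumnSums

variable {ι K : Type*} [Fintype ι] [Field K]

lemma sum_eq_zero_of_mulVec_eq_smul {A : Matrix ι ι K} (hA : 1 ᵥ* A = 1) {v : ι → K} {μ : K}
    (hv : A *ᵥ v = μ • v) (hμ : μ ≠ 1) : ∑ i, v i = 0 := by
  have h : μ * (1 ⬝ᵥ v) = 1 ⬝ᵥ v := by
    rw [← smul_eq_mul, ← dotProduct_smul, ← hv, dotProduct_mulVec, hA]
  rw [← one_dotProduct]
  by_contra hs
  exact hμ ((mul_eq_right₀ hs).mp h)

lemma one_vecMul_map_ofReal {A : Matrix ι ι ℝ} (hA : ∀ j, ∑ i, A i j = 1) :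
    1 ᵥ* A.map Complex.ofReal = 1 := by
  ext j
  simp only [vecMul, dotProduct, Pi.one_apply, one_mul, map_apply, ← Complex.ofReal_sum, hA j,
    Complex.ofReal_one]

lemma sum_sum_smul_apply_eq_zero {κ R : Type*} [Fintype κ] [CommRing R] {ε : κ → R}
    {m : κ → Matrix ι ι R} {j : ι} (hm : ∀ k, ∑ i, m k i j = 0) :
    ∑ i, (∑ k, ε k • m k) i j = 0 := by
  simp only [Matrix.sum_apply, Matrix.smul_apply, smul_eq_mul]
  rw [sum_comm]
  exact sum_eq_zero fun k _ => by rw [← mul_sum, hm k, mul_zero]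

variable [DecidableEq ι]

lemma exists_mulVec_eq_self_of_one_vecMul [Nonempty ι] {A : Matrix ι ι K} (hA : 1 ᵥ* A = 1) :
    ∃ v ≠ 0, A *ᵥ v = v := by
  have hdet : (A - 1).det = 0 := by
    rw [← det_transpose, ← exists_mulVec_eq_zero_iff]
    exact ⟨1, one_ne_zero, by rw [mulVec_transpose, vecMul_sub, hA, vecMul_one, sub_self]⟩
  obtain ⟨v, hv0, hv⟩ := exists_mulVec_eq_zero_iff.mpr hdet
  exact ⟨v, hv0, by rwa [sub_mulVec, one_mulVec, sub_eq_zero] at hv⟩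

lemma finrank_eigenspace_one_eq_one [Nonempty ι] {A : Matrix ι ι K} (hA : 1 ᵥ* A = 1)
    (h : ∀ v, A *ᵥ v = v → ∑ i, v i = 0 → v = 0) :
    Module.finrank K (Module.End.eigenspace (mulVecLin A) 1) = 1 := by
  refine Submodule.finrank_eq_one_of_forall_eq_zero ?_ (∑ i, LinearMap.proj i) fun x hx hsum => ?_
  · obtain ⟨v, hv0, hv⟩ := exists_mulVec_eq_self_of_one_vecMul hA
    exact (Submodule.ne_bot_iff _).mpr ⟨v, by simpa [Module.End.mem_eigenspace_iff] using hv, hv0⟩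
  · rw [Module.End.mem_eigenspace_iff, mulVecLin_apply, one_smul] at hx
    exact h x hx (by simpa using hsum)

/-- `1 ᵥ* X⁻¹` is a left eigenvector of `diagonal d` for the eigenvalue `1`, hence supported
on `i₀`. -/
lemma exists_row_eq_const_of_one_vecMul {X : Matrix ι ι K} (hX : IsUnit X.det) {d : ι → K}
    {i₀ : ι} (hd : ∀ j ≠ i₀, d j ≠ 1) (hA : 1 ᵥ* (X⁻¹ * diagonal d * X) = 1) :
    ∃ c, ∀ k, X i₀ k = c := by
  set y := 1 ᵥ* X⁻¹
  have hyD : y ᵥ* diagonal d = y := by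
    calc y ᵥ* diagonal d = 1 ᵥ* (X⁻¹ * diagonal d * X) ᵥ* X⁻¹ := by
          rw [vecMul_vecMul, vecMul_vecMul, Matrix.mul_assoc _ X, mul_nonsing_inv X hX,
            Matrix.mul_one]
      _ = y := by rw [hA]
  have hy : ∀ j ≠ i₀, y j = 0 := fun j hj => by
    have h := congrFun hyD j
    rw [vecMul_diagonal] at h
    by_contra hyj
    exact hd j hj ((mul_eq_left₀ hyj).mp h)
  have hyX : ∀ k, y i₀ * X i₀ k = 1 := fun k => by
    have h := congrFun (show y ᵥ* X = 1 by rw [vecMul_vecMul, nonsing_inv_mul X hX, vecMul_one]) k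
    rwa [vecMul, dotProduct, sum_eq_single i₀ (fun j _ hj => by rw [hy j hj, zero_mul])
      (fun h => absurd (mem_univ i₀) h)] at h
  exact ⟨(y i₀)⁻¹, fun k => eq_inv_of_mul_eq_one_right (hyX k)⟩

end ColumnSums

lemma exists_ne_zero_mul_sum_norm_le {ι E : Type*} [Fintype ι] [NormedAddCommGroup E]
    {w : ι → E} (hw : w ≠ 0) (a : ι → ℝ) :
    ∃ j, w j ≠ 0 ∧ a j * ∑ i, ‖w i‖ ≤ ∑ i, a i * ‖w i‖ := by
  classical
  obtain ⟨j₀, hj₀⟩ := Function.ne_iff.mp hw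
  obtain ⟨j, hj, hmin⟩ := (univ.filter (w · ≠ 0)).exists_min_image a ⟨j₀, by simpa using hj₀⟩
  refine ⟨j, (mem_filter.mp hj).2, ?_⟩
  rw [mul_sum]
  refine sum_le_sum fun i _ => ?_
  by_cases hi : w i = 0
  · simp [hi]
  · exact mul_le_mul_of_nonneg_right (hmin i (by simpa using hi)) (norm_nonneg _)

section L1Norm

variable {N : ℕ}

lemma sum_norm_le_l1opNormC (A : Matrix (Fin (N+2)) (Fin (N+2)) ℂ) (j : Fin (N+2)) :
    ∑ i, ‖A i j‖ ≤ l1opNormC A :=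
  le_sup' (fun j => ∑ i, ‖A i j‖) (mem_univ j)

lemma l1opNormC_nonneg (A : Matrix (Fin (N+2)) (Fin (N+2)) ℂ) : 0 ≤ l1opNormC A :=
  (sum_nonneg fun _ _ => norm_nonneg _).trans (sum_norm_le_l1opNormC A 0)

lemma sum_norm_mulVec_le (A : Matrix (Fin (N+2)) (Fin (N+2)) ℂ) (y : Fin (N+2) → ℂ) :
    ∑ i, ‖(A *ᵥ y) i‖ ≤ l1opNormC A * ∑ j, ‖y j‖ := by
  calc ∑ i, ‖(A *ᵥ y) i‖ ≤ ∑ i, ∑ j, ‖A i j‖ * ‖y j‖ :=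
        sum_le_sum fun i _ =>
          (norm_sum_le univ fun j => A i j * y j).trans_eq (by simp only [norm_mul])
    _ = ∑ j, (∑ i, ‖A i j‖) * ‖y j‖ := by rw [sum_comm]; simp_rw [sum_mul]
    _ ≤ ∑ j, l1opNormC A * ‖y j‖ :=
        sum_le_sum fun j _ =>
          mul_le_mul_of_nonneg_right (sum_norm_le_l1opNormC A j) (norm_nonneg _)
    _ = l1opNormC A * ∑ j, ‖y j‖ := (mul_sum _ _ _).symm

lemma l1opNormC_map_ofReal (A : Matrix (Fin (N+2)) (Fin (N+2)) ℝ) :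
    l1opNormC (A.map Complex.ofReal) = l1opNormR A := by
  simp [l1opNormC, l1opNormR, Complex.norm_real]

lemma l1opNormR_sum_smul_le {κ : Type*} [Fintype κ] (ε : κ → ℝ)
    (m : κ → Matrix (Fin (N+2)) (Fin (N+2)) ℝ) :
    l1opNormR (∑ k, ε k • m k) ≤ ∑ k, |ε k| * l1opNormR (m k) := by
  refine sup'_le _ _ fun j _ => ?_
  calc ∑ i, |(∑ k, ε k • m k) i j| ≤ ∑ i, ∑ k, |ε k| * |m k i j| := by
        refine sum_le_sum fun i _ => ?_
        simp only [Matrix.sum_apply, Matrix.smul_apply, smul_eq_mul, ← abs_mul]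
        exact abs_sum_le_sum_abs _ _
    _ = ∑ k, |ε k| * ∑ i, |m k i j| := by rw [sum_comm]; simp_rw [mul_sum]
    _ ≤ ∑ k, |ε k| * l1opNormR (m k) :=
        sum_le_sum fun k _ => mul_le_mul_of_nonneg_left
          (le_sup' (fun j => ∑ i, |m k i j|) (mem_univ j)) (abs_nonneg _)

lemma l1opNormR_nonneg (A : Matrix (Fin (N+2)) (Fin (N+2)) ℝ) : 0 ≤ l1opNormR A :=
  l1opNormC_map_ofReal A ▸ l1opNormC_nonneg _

lemma l1opNormR_sum_smul_le_sup_mul_sup {κ : Type*} [Fintype κ] [Nonempty κ] (ε : κ → ℝ)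
    (m : κ → Matrix (Fin (N+2)) (Fin (N+2)) ℝ) :
    l1opNormR (∑ k, ε k • m k) ≤ (univ.sup' univ_nonempty fun k => |ε k|) * Fintype.card κ *
      univ.sup' univ_nonempty fun k => l1opNormR (m k) := by
  obtain ⟨k₀⟩ := ‹Nonempty κ›
  have hε : 0 ≤ univ.sup' univ_nonempty fun k => |ε k| :=
    (abs_nonneg (ε k₀)).trans (le_sup' (fun k => |ε k|) (mem_univ k₀))
  calc l1opNormR (∑ k, ε k • m k) ≤ ∑ k, |ε k| * l1opNormR (m k) := l1opNormR_sum_smul_le ε m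
    _ ≤ ∑ _k : κ, (univ.sup' univ_nonempty fun k => |ε k|) *
          univ.sup' univ_nonempty fun k => l1opNormR (m k) :=
        sum_le_sum fun k _ => mul_le_mul (le_sup' (fun k => |ε k|) (mem_univ k))
          (le_sup' (fun k => l1opNormR (m k)) (mem_univ k)) (l1opNormR_nonneg _) hε
    _ = _ := by rw [sum_const, card_univ, nsmul_eq_mul]; ring

/-- The Bauer–Fike theorem in the ℓ¹ operator norm. -/
theorem exists_norm_sub_le_of_mulVec_eq_smul {X E : Matrix (Fin (N+2)) (Fin (N+2)) ℂ}
    (hX : IsUnit X.det) (d : Fin (N+2) → ℂ) {v : Fin (N+2) → ℂ} {μ : ℂ}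
    (hv : (X⁻¹ * diagonal d * X + E) *ᵥ v = μ • v) (hv0 : v ≠ 0) :
    ∃ j, (X *ᵥ v) j ≠ 0 ∧ ‖μ - d j‖ ≤ l1opNormC X * l1opNormC X⁻¹ * l1opNormC E := by
  set w := X *ᵥ v
  have hvw : v = X⁻¹ *ᵥ w := by rw [mulVec_mulVec, nonsing_inv_mul X hX, one_mulVec]
  have hw0 : w ≠ 0 := fun h => hv0 (by rw [hvw, h, mulVec_zero])
  have hD : X *ᵥ (X⁻¹ * diagonal d * X) *ᵥ v = diagonal d *ᵥ w := by
    rw [mulVec_mulVec, Matrix.mul_assoc X⁻¹, mul_nonsing_inv_cancel_left X _ hX, ← mulVec_mulVec]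
  have hcomp : ∀ i, (μ - d i) * w i = (X *ᵥ E *ᵥ X⁻¹ *ᵥ w) i := fun i => by
    have h := congrFun (congrArg (X *ᵥ ·) hv) i
    simp only [add_mulVec, mulVec_add, mulVec_smul, hD, Pi.add_apply, Pi.smul_apply,
      smul_eq_mul, mulVec_diagonal] at h
    rw [← hvw]
    linear_combination -h
  obtain ⟨j, hj, hmin⟩ := exists_ne_zero_mul_sum_norm_le hw0 fun i => ‖μ - d i‖
  refine ⟨j, hj, le_of_mul_le_mul_right ?_ ((norm_pos_iff.mpr hj).trans_le
    (single_le_sum (fun i _ => norm_nonneg (w i)) (mem_univ j)))⟩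
  calc ‖μ - d j‖ * ∑ i, ‖w i‖ ≤ ∑ i, ‖(X *ᵥ E *ᵥ X⁻¹ *ᵥ w) i‖ := by
        simpa only [← hcomp, norm_mul] using hmin
    _ ≤ l1opNormC X * (l1opNormC E * (l1opNormC X⁻¹ * ∑ i, ‖w i‖)) :=
        (sum_norm_mulVec_le _ _).trans <| mul_le_mul_of_nonneg_left
          ((sum_norm_mulVec_le _ _).trans <| mul_le_mul_of_nonneg_left
            (sum_norm_mulVec_le _ _) (l1opNormC_nonneg E)) (l1opNormC_nonneg X)
    _ = l1opNormC X * l1opNormC X⁻¹ * l1opNormC E * ∑ i, ‖w i‖ := by ring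

theorem norm_lt_one_of_mulVec_eq_smul {X E : Matrix (Fin (N+2)) (Fin (N+2)) ℂ}
    (hX : IsUnit X.det) {d : Fin (N+2) → ℂ} (hM : 1 ᵥ* (X⁻¹ * diagonal d * X) = 1)
    (hgap : ∀ j ≠ 0, ‖d j‖ + l1opNormC X * l1opNormC X⁻¹ * l1opNormC E < 1)
    {v : Fin (N+2) → ℂ} {μ : ℂ} (hv : (X⁻¹ * diagonal d * X + E) *ᵥ v = μ • v) (hv0 : v ≠ 0)
    (hsum : ∑ i, v i = 0) : ‖μ‖ < 1 := by
  have hκE : 0 ≤ l1opNormC X * l1opNormC X⁻¹ * l1opNormC E :=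
    mul_nonneg (mul_nonneg (l1opNormC_nonneg X) (l1opNormC_nonneg X⁻¹)) (l1opNormC_nonneg E)
  obtain ⟨c, hc⟩ := exists_row_eq_const_of_one_vecMul hX (i₀ := 0)
    (fun j hj h1 => by linarith [hgap j hj, show ‖d j‖ = 1 by simp [h1]]) hM
  obtain ⟨j, hj, hμj⟩ := exists_norm_sub_le_of_mulVec_eq_smul hX d hv hv0
  have hj0 : j ≠ 0 := by
    rintro rfl
    exact hj (by simp [mulVec, dotProduct, hc, ← mul_sum, hsum])
  linarith [norm_le_norm_add_norm_sub' μ (d j), hgap j hj0]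

end L1Norm

theorem perturbed_chain_spectral_stability
    (N n : ℕ) (M : Matrix (Fin (N+2)) (Fin (N+2)) ℝ)
    (hcol : ∀ j, ∑ i, M i j = 1)
    (X Λ : Matrix (Fin (N+2)) (Fin (N+2)) ℂ) (d : Fin (N+2) → ℂ)
    (hX : IsUnit X.det)
    (hΛ : Λ = Matrix.diagonal d)
    (hdec : M.map (Complex.ofReal) = X⁻¹ * Λ * X)
    (m : Fin (n+1) → Matrix (Fin (N+2)) (Fin (N+2)) ℝ)
    (hmcol : ∀ k j, ∑ i, m k i j = 0)
    (ε : Fin (n+1) → ℝ)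
    (hcond : l1opNormC X * l1opNormC X⁻¹ *
        (Finset.univ.sup' Finset.univ_nonempty fun k => |ε k|) * (n + 1) *
        (Finset.univ.sup' Finset.univ_nonempty fun k => l1opNormR (m k)) <
      (1/2) * ((Finset.univ.erase (0 : Fin (N+2))).inf'
        ⟨1, by simp⟩ fun j => 1 - ‖d j‖)) :
    (∀ μ : ℂ, μ ≠ 1 →
      (∃ v : Fin (N+2) → ℂ, v ≠ 0 ∧
        ((M + ∑ k, ε k • m k).map (Complex.ofReal)).mulVec v = μ • v) →
      ‖μ‖ < 1) ∧
    Module.finrank ℂ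
      (Module.End.eigenspace
        (Matrix.mulVecLin ((M + ∑ k, ε k • m k).map (Complex.ofReal))) 1) = 1 := by
  set E := ∑ k, ε k • m k
  set A := (M + E).map Complex.ofReal
  have hA : A = X⁻¹ * diagonal d * X + E.map Complex.ofReal := by
    rw [← hΛ, ← hdec, ← Matrix.map_add _ Complex.ofReal_add]
  have hM : 1 ᵥ* (X⁻¹ * diagonal d * X) = 1 := by
    rw [← hΛ, ← hdec]; exact one_vecMul_map_ofReal hcol
  have hA1 : 1 ᵥ* A = 1 := one_vecMul_map_ofReal fun j => by
    simp only [Matrix.add_apply, sum_add_distrib, hcol]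
    exact add_eq_left.mpr (sum_sum_smul_apply_eq_zero (hmcol · j))
  have hgap : ∀ j ≠ 0,
      ‖d j‖ + l1opNormC X * l1opNormC X⁻¹ * l1opNormC (E.map Complex.ofReal) < 1 := fun j hj => by
    have hg := inf'_le (fun j => 1 - ‖d j‖) (mem_erase.mpr ⟨hj, mem_univ j⟩)
    have hE := l1opNormR_sum_smul_le_sup_mul_sup ε m
    rw [Fintype.card_fin, Nat.cast_add, Nat.cast_one] at hE
    have hκ := mul_nonneg (l1opNormC_nonneg X) (l1opNormC_nonneg X⁻¹)
    have hκE := mul_le_mul_of_nonneg_left hE hκ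
    have := mul_nonneg hκ (l1opNormR_nonneg E)
    rw [l1opNormC_map_ofReal]
    linarith
  have hstable : ∀ (μ : ℂ) v, A *ᵥ v = μ • v → v ≠ 0 → ∑ i, v i = 0 → ‖μ‖ < 1 :=
    fun μ v hv => norm_lt_one_of_mulVec_eq_smul hX hM hgap (hA ▸ hv)
  refine ⟨fun μ hμ ⟨v, hv0, hv⟩ => hstable μ v hv hv0 (sum_eq_zero_of_mulVec_eq_smul hA1 hv hμ),
    finrank_eigenspace_one_eq_one hA1 fun v hv hsum => ?_⟩
  by_contra hv0
  exact (hstable 1 v (by rwa [one_smul]) hv0 hsum).ne norm_one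
end

section
/- If M is a column-stochastic matrix some power of which has strictly positive entries, and u, u' are two probability vectors with Mu = u and Mu' = u', then u = u'. (Uniqueness of the invariant probability vector of a primitive stochastic matrix.) -/
theorem primitive_stochastic_invariant_vector_unique
    (N : ℕ) (M : Matrix (Fin N) (Fin N) ℝ)
    (hnn : ∀ i j, 0 ≤ M i j) (hcol : ∀ j, ∑ i, M i j = 1)
    (hprim : ∃ p : ℕ, 0 < p ∧ ∀ i j, 0 < (M ^ p) i j)
    (u u' : Fin N → ℝ)
    (hupos : ∀ i, 0 ≤ u i) (husum : ∑ i, u i = 1) (hu : M.mulVec u = u)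
    (hupos' : ∀ i, 0 ≤ u' i) (husum' : ∑ i, u' i = 1) (hu' : M.mulVec u' = u') :
    u = u' := by
  obtain ⟨p, hp, hApos⟩ := hprim
  set A := M ^ p with hAdef
  -- column sums of powers are 1
  have hcolpow : ∀ n : ℕ, ∀ j, ∑ i, (M ^ n) i j = 1 := by
    intro n
    induction n with
    | zero => intro j; simp [Matrix.one_apply]
    | succ n ih =>
      intro j
      rw [pow_succ']
      simp only [Matrix.mul_apply]
      rw [Finset.sum_comm]
      calc ∑ k, ∑ i, M i k * (M ^ n) k j
          = ∑ k, (∑ i, M i k) * (M ^ n) k j := by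
            simp [Finset.sum_mul]
        _ = ∑ k, (M ^ n) k j := by simp [hcol]
        _ = 1 := ih j
  set v : Fin N → ℝ := u - u' with hvdef
  have hMv : M.mulVec v = v := by
    rw [hvdef, Matrix.mulVec_sub, hu, hu']
  have hAv : A.mulVec v = v := by
    rw [hAdef]
    clear hApos hAdef
    induction p with
    | zero => simp [Matrix.one_mulVec]
    | succ n ih =>
      by_cases hn : n = 0
      · simp [hn, pow_one, hMv]
      · have ih' := ih (Nat.pos_of_ne_zero hn)
        rw [pow_succ', ← Matrix.mulVec_mulVec, ih', hMv]
  have hvsum : ∑ i, v i = 0 := by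
    simp [hvdef, Finset.sum_sub_distrib, husum, husum']
  by_contra hne
  have hvne : ∃ j, v j ≠ 0 := by
    by_contra h
    push_neg at h
    apply hne
    funext i
    have := h i
    simp [hvdef, sub_eq_zero] at this ⊢
    exact this
  -- there are entries of both signs
  have hposex : ∃ j, 0 < v j := by
    by_contra h
    push_neg at h
    obtain ⟨j, hj⟩ := hvne
    have : ∀ i ∈ Finset.univ, 0 ≤ -v i := fun i _ => by linarith [h i]
    have hz : ∑ i, -v i = 0 := by simp [hvsum]
    have := (Finset.sum_eq_zero_iff_of_nonneg this).mp hz j (Finset.mem_univ j)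
    apply hj; linarith
  have hnegex : ∃ j, v j < 0 := by
    by_contra h
    push_neg at h
    obtain ⟨j, hj⟩ := hvne
    have : ∀ i ∈ Finset.univ, 0 ≤ v i := fun i _ => h i
    have := (Finset.sum_eq_zero_iff_of_nonneg this).mp hvsum j (Finset.mem_univ j)
    exact hj this
  obtain ⟨j0, hj0⟩ := hposex
  obtain ⟨j1, hj1⟩ := hnegex
  -- strict inequality for every row
  have hstrict : ∀ i, |v i| < ∑ j, A i j * |v j| := by
    intro i
    have hvi : v i = ∑ j, A i j * v j := by
      conv_lhs => rw [← hAv]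
      simp [Matrix.mulVec, dotProduct]
    rcases le_or_gt 0 (v i) with hs | hs
    · have key : 0 < ∑ j, (A i j * |v j| - A i j * v j) := by
        apply Finset.sum_pos' (fun j _ => by
          have := le_abs_self (v j)
          nlinarith [(hApos i j)])
        refine ⟨j1, Finset.mem_univ j1, ?_⟩
        have h1 : |v j1| = -v j1 := abs_of_neg hj1
        nlinarith [hApos i j1]
      rw [Finset.sum_sub_distrib] at key
      rw [abs_of_nonneg hs, hvi]
      linarith
    · have key : 0 < ∑ j, (A i j * |v j| + A i j * v j) := by
        apply Finset.sum_pos' (fun j _ => by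
          have := neg_abs_le (v j)
          nlinarith [(hApos i j)])
        refine ⟨j0, Finset.mem_univ j0, ?_⟩
        have h1 : |v j0| = v j0 := abs_of_pos hj0
        nlinarith [hApos i j0]
      rw [Finset.sum_add_distrib] at key
      rw [abs_of_neg hs, hvi]
      linarith
  have htotal : ∑ i, ∑ j, A i j * |v j| = ∑ j, |v j| := by
    rw [Finset.sum_comm]
    calc ∑ j, ∑ i, A i j * |v j|
        = ∑ j, (∑ i, A i j) * |v j| := by simp [Finset.sum_mul]
      _ = ∑ j, |v j| := by simp [hAdef, hcolpow p]
  have : ∑ i, |v i| < ∑ i, ∑ j, A i j * |v j| :=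
    Finset.sum_lt_sum_of_nonempty ⟨j0, Finset.mem_univ j0⟩ (fun i _ => hstrict i)
  rw [htotal] at this
  exact lt_irrefl _ this
end

section
/- If M is a primitive column-stochastic matrix with invariant probability vector u, then for every probability vector u₀, M^p u₀ → u as p → ∞. -/
open Finset Filter

theorem primitive_stochastic_powers_converge
    (N : ℕ) (M : Matrix (Fin N) (Fin N) ℝ)
    (hnn : ∀ i j, 0 ≤ M i j) (hcol : ∀ j, ∑ i, M i j = 1)
    (hprim : ∃ p : ℕ, 0 < p ∧ ∀ i j, 0 < (M ^ p) i j)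
    (u : Fin N → ℝ) (hupos : ∀ i, 0 ≤ u i) (husum : ∑ i, u i = 1)
    (hu : M.mulVec u = u)
    (u₀ : Fin N → ℝ) (hu₀pos : ∀ i, 0 ≤ u₀ i) (hu₀sum : ∑ i, u₀ i = 1) :
    Filter.Tendsto (fun p : ℕ => (M ^ p).mulVec u₀) Filter.atTop (nhds u) := by
  classical
  rcases Nat.eq_zero_or_pos N with hN | hN
  · subst hN
    have : (fun p : ℕ => (M ^ p).mulVec u₀) = fun _ => u := by
      funext p; exact Subsingleton.elim _ _
    rw [this]; exact tendsto_const_nhds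
  obtain ⟨q, hq, hA⟩ := hprim
  set A := M ^ q with hAdef
  -- column sums of powers are 1
  have hcolpow : ∀ p : ℕ, ∀ j, ∑ i, (M ^ p) i j = 1 := by
    intro p
    induction p with
    | zero => intro j; simp [Matrix.one_apply]
    | succ p ih =>
      intro j
      rw [pow_succ]
      simp only [Matrix.mul_apply]
      rw [Finset.sum_comm]
      calc ∑ k, ∑ i, (M ^ p) i k * M k j
          = ∑ k, (∑ i, (M ^ p) i k) * M k j := by simp [Finset.sum_mul]
        _ = ∑ k, M k j := by simp [ih]
        _ = 1 := hcol j
  set f : (Fin N → ℝ) → ℝ := fun v => ∑ i, |v i| with hf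
  have hf_contract_one : ∀ v, f (M.mulVec v) ≤ f v := by
    intro v
    calc ∑ i, |M.mulVec v i| = ∑ i, |∑ j, M i j * v j| := by
          simp [Matrix.mulVec, dotProduct]
      _ ≤ ∑ i, ∑ j, |M i j * v j| := by
          exact Finset.sum_le_sum fun i _ => Finset.abs_sum_le_sum_abs _ _
      _ = ∑ j, (∑ i, M i j) * |v j| := by
          rw [Finset.sum_comm]
          refine Finset.sum_congr rfl fun j _ => ?_
          rw [Finset.sum_mul]
          refine Finset.sum_congr rfl fun i _ => ?_
          rw [abs_mul, abs_of_nonneg (hnn i j)]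
      _ = f v := by simp [hcol, hf]
  -- the minimal entry of A
  haveI : NeZero N := ⟨hN.ne'⟩
  set ε : ℝ := Finset.univ.inf' Finset.univ_nonempty (fun p : Fin N × Fin N => A p.1 p.2) with hε
  have hεpos : 0 < ε := by
    rw [hε, Finset.lt_inf'_iff]
    exact fun b _ => hA b.1 b.2
  have hεle : ∀ i j, ε ≤ A i j := fun i j =>
    Finset.inf'_le _ (Finset.mem_univ (i, j))
  have hNε : (N : ℝ) * ε ≤ 1 := by
    have h0 : (⟨0, hN⟩ : Fin N) = ⟨0, hN⟩ := rfl
    have := hcolpow q (⟨0, hN⟩ : Fin N)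
    calc (N : ℝ) * ε = ∑ _i : Fin N, ε := by simp [mul_comm]
      _ ≤ ∑ i, A i (⟨0, hN⟩ : Fin N) := Finset.sum_le_sum fun i _ => hεle i _
      _ = 1 := this
  set c : ℝ := 1 - (N : ℝ) * ε with hc
  have hc0 : 0 ≤ c := by rw [hc]; linarith
  have hc1 : c < 1 := by
    have : 0 < (N : ℝ) * ε := mul_pos (by exact_mod_cast hN) hεpos
    rw [hc]; linarith
  -- contraction on sum-zero vectors
  have key : ∀ v, (∑ i, v i = 0) → f (A.mulVec v) ≤ c * f v := by
    intro v hv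
    have h1 : ∀ i, A.mulVec v i = ∑ j, (A i j - ε) * v j := by
      intro i
      simp only [Matrix.mulVec, dotProduct, sub_mul, Finset.sum_sub_distrib,
        ← Finset.mul_sum, hv, mul_zero, sub_zero]
    calc f (A.mulVec v) = ∑ i, |∑ j, (A i j - ε) * v j| := by
          simp only [hf]; exact Finset.sum_congr rfl fun i _ => by rw [h1]
      _ ≤ ∑ i, ∑ j, (A i j - ε) * |v j| := by
          refine Finset.sum_le_sum fun i _ => ?_
          refine (Finset.abs_sum_le_sum_abs _ _).trans ?_
          refine Finset.sum_le_sum fun j _ => ?_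
          rw [abs_mul, abs_of_nonneg (sub_nonneg.2 (hεle i j))]
      _ = ∑ j, (∑ i, (A i j - ε)) * |v j| := by
          rw [Finset.sum_comm]
          exact Finset.sum_congr rfl fun j _ => (Finset.sum_mul _ _ _).symm
      _ = ∑ j, c * |v j| := by
          refine Finset.sum_congr rfl fun j _ => ?_
          rw [Finset.sum_sub_distrib, hcolpow q j, Finset.sum_const, Finset.card_univ,
            Fintype.card_fin, nsmul_eq_mul, hc]
      _ = c * f v := by rw [← Finset.mul_sum]
  -- powers fix u
  have hMu : ∀ p : ℕ, (M ^ p).mulVec u = u := by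
    intro p
    induction p with
    | zero => simp
    | succ p ih =>
      rw [pow_succ', ← Matrix.mulVec_mulVec, ih, hu]
  set v : ℕ → Fin N → ℝ := fun p => (M ^ p).mulVec u₀ - u with hv
  have hstep : ∀ p, v (p + 1) = M.mulVec (v p) := by
    intro p
    simp only [hv, pow_succ', ← Matrix.mulVec_mulVec]
    rw [Matrix.mulVec_sub, hu]
  have hjump : ∀ p, v (p + q) = A.mulVec (v p) := by
    intro p
    have : M ^ (p + q) = A * M ^ p := by rw [hAdef, ← pow_add, add_comm]
    simp only [hv, this, ← Matrix.mulVec_mulVec]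
    rw [Matrix.mulVec_sub]
    rw [show A.mulVec u = u from hMu q]
  have hsumv : ∀ p, ∑ i, v p i = 0 := by
    intro p
    have : ∑ i, ((M ^ p).mulVec u₀) i = 1 := by
      calc ∑ i, ((M ^ p).mulVec u₀) i = ∑ i, ∑ j, (M ^ p) i j * u₀ j := by
            simp [Matrix.mulVec, dotProduct]
        _ = ∑ j, (∑ i, (M ^ p) i j) * u₀ j := by
            rw [Finset.sum_comm]; simp [Finset.sum_mul]
        _ = 1 := by simp [hcolpow p, hu₀sum]
    simp [hv, Finset.sum_sub_distrib, this, husum]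
  have hle0 : ∀ p, f (v p) ≤ f (v 0) := by
    intro p
    induction p with
    | zero => exact le_refl _
    | succ p ih => exact le_trans (by rw [hstep p]; exact hf_contract_one _) ih
  have hbound : ∀ p, f (v p) ≤ c ^ (p / q) * f (v 0) := by
    intro p
    induction p using Nat.strong_induction_on with
    | _ p ih =>
      rcases lt_or_ge p q with hpq | hpq
      · rw [Nat.div_eq_of_lt hpq]; simpa using hle0 p
      · obtain ⟨r, rfl⟩ : ∃ r, p = r + q := ⟨p - q, by omega⟩
        have hrec := ih r (by omega)
        have h2 : f (v (r + q)) ≤ c * f (v r) := by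
          rw [hjump]; exact key _ (hsumv _)
        rw [Nat.add_div_right r hq, pow_succ]
        calc f (v (r + q)) ≤ c * f (v r) := h2
          _ ≤ c * (c ^ (r / q) * f (v 0)) := mul_le_mul_of_nonneg_left hrec hc0
          _ = c ^ (r / q) * c * f (v 0) := by ring
  -- convergence
  have hdivtop : Tendsto (fun p : ℕ => p / q) atTop atTop := by
    refine tendsto_atTop_atTop.2 fun b => ⟨b * q, fun p hp => ?_⟩
    calc b = b * q / q := by rw [Nat.mul_div_cancel b hq]
      _ ≤ p / q := Nat.div_le_div_right hp
  have htend : Tendsto (fun p : ℕ => c ^ (p / q) * f (v 0)) atTop (nhds 0) := by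
    have h1 : Tendsto (fun p : ℕ => c ^ (p / q)) atTop (nhds 0) :=
      (tendsto_pow_atTop_nhds_zero_of_lt_one hc0 hc1).comp hdivtop
    simpa using h1.mul_const (f (v 0))
  have hv0 : Tendsto v atTop (nhds 0) := by
    rw [tendsto_pi_nhds]
    intro i
    refine squeeze_zero_norm (fun p => ?_) htend
    have h1 : |v p i| ≤ f (v p) :=
      Finset.single_le_sum (f := fun j => |v p j|) (fun j _ => abs_nonneg _) (Finset.mem_univ i)
    calc ‖v p i‖ = |v p i| := rfl
      _ ≤ f (v p) := h1
      _ ≤ c ^ (p / q) * f (v 0) := hbound p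
  have : Tendsto (fun p => v p + u) atTop (nhds (0 + u)) :=
    hv0.add tendsto_const_nhds
  simpa [hv] using this
end
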